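/- Let P = {e_1,…,e_m} be an atomic Cartesian decomposition of a finite set Ω. Then for every partition R of the index set M = {1,…,m}, the set P^R = {P_I : I ∈ R} is again an atomic Cartesian decomposition of Ω. -/

import Mathlib

open Set

def rcomp {Ω : Type*} (r s : Set (Ω × Ω)) : Set (Ω × Ω) :=
  {p | ∃ γ, (p.1, γ) ∈ r ∧ (γ, p.2) ∈ s}

def rconv {Ω : Type*} (r : Set (Ω × Ω)) : Set (Ω × Ω) := {p | (p.2, p.1) ∈ r}

def rdiag (Ω : Type*) : Set (Ω × Ω) := {p | p.1 = p.2}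

def IsEquivRel {Ω : Type*} (e : Set (Ω × Ω)) : Prop :=
  Equivalence (fun a b => (a, b) ∈ e)

/-- The smallest equivalence relation containing `r`. -/
def eqvClosure {Ω : Type*} (r : Set (Ω × Ω)) : Set (Ω × Ω) :=
  ⋂₀ {e | IsEquivRel e ∧ r ⊆ e}

/-- Join of two equivalence relations. -/
def rjoin {Ω : Type*} (e f : Set (Ω × Ω)) : Set (Ω × Ω) := eqvClosure (e ∪ f)

def IsClass {Ω : Type*} (e : Set (Ω × Ω)) (Δ : Set Ω) : Prop :=
  ∃ α, Δ = {β | (α, β) ∈ e}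

def setoidRel {Ω : Type*} (e : Setoid Ω) : Set (Ω × Ω) := {p | e.r p.1 p.2}

/-- The relation induced on the quotient `Ω/e` by a relation `r` on `Ω`. -/
def qmap {Ω : Type*} (e : Setoid Ω) (r : Set (Ω × Ω)) :
    Set (Quotient e × Quotient e) :=
  {p | ∃ a b : Ω, Quotient.mk e a = p.1 ∧ Quotient.mk e b = p.2 ∧ (a, b) ∈ r}

/-- Tensor product of relations. -/
def tensorRel {m : ℕ} {Ω : Fin m → Type*} (s : ∀ i, Set (Ω i × Ω i)) :
    Set ((∀ i, Ω i) × (∀ i, Ω i)) :=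
  {p | ∀ i, (p.1 i, p.2 i) ∈ s i}

def tensor2 {Ω₁ Ω₂ : Type*} (s₁ : Set (Ω₁ × Ω₁)) (s₂ : Set (Ω₂ × Ω₂)) :
    Set ((Ω₁ × Ω₂) × (Ω₁ × Ω₂)) :=
  {p | (p.1.1, p.2.1) ∈ s₁ ∧ (p.1.2, p.2.2) ∈ s₂}

/-- `PP e I` is the join of the equivalence relations `e i`, `i ∈ I`. -/
def PP {Ω : Type*} {m : ℕ} (e : Fin m → Set (Ω × Ω)) (I : Set (Fin m)) :
    Set (Ω × Ω) :=
  eqvClosure (⋃ i ∈ I, e i)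

/-- An atomic Cartesian decomposition, given as a family of equivalence relations. -/
def IsACDfam {Ω : Type*} {m : ℕ} (e : Fin m → Set (Ω × Ω)) : Prop :=
  0 < m ∧ (∀ i, IsEquivRel (e i)) ∧ (∀ i, e i ≠ rdiag Ω) ∧
  (∀ i j, rcomp (e i) (e j) = rcomp (e j) (e i)) ∧
  (∀ i, e i ∩ PP e ({i}ᶜ) = rdiag Ω) ∧
  (∀ i, rjoin (e i) (PP e ({i}ᶜ)) = Set.univ)

/-- Join of a set of relations. -/
def joinAll {Ω : Type*} (B : Set (Set (Ω × Ω))) : Set (Ω × Ω) := eqvClosure (⋃₀ B)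

/-- The `P`-complement of `e`: the join of the members of `P` other than `e`. -/
def pcompl {Ω : Type*} (P : Set (Set (Ω × Ω))) (e : Set (Ω × Ω)) : Set (Ω × Ω) :=
  joinAll (P \ {e})

/-- An atomic Cartesian decomposition, given as a set of equivalence relations. -/
def IsACD {Ω : Type*} (P : Set (Set (Ω × Ω))) : Prop :=
  P.Nonempty ∧ (∀ e ∈ P, IsEquivRel e ∧ e ≠ rdiag Ω) ∧
  (∀ e ∈ P, ∀ f ∈ P, rcomp e f = rcomp f e) ∧
  (∀ e ∈ P, e ∩ pcompl P e = rdiag Ω ∧ rjoin e (pcompl P e) = Set.univ)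

def IsPartitionOf {α : Type*} (P : Set α) (C : Set (Set α)) : Prop :=
  (∀ B ∈ C, B.Nonempty) ∧ (∀ B ∈ C, ∀ B' ∈ C, B ≠ B' → Disjoint B B') ∧ ⋃₀ C = P

/-- A coherent configuration on `Ω`. -/
structure CohCfg (Ω : Type*) where
  S : Set (Set (Ω × Ω))
  empty_not_mem : ∅ ∉ S
  cover : ∀ p : Ω × Ω, ∃ s ∈ S, p ∈ s
  pairwise_disjoint : ∀ s ∈ S, ∀ t ∈ S, s ≠ t → Disjoint s t
  diag_union : ∀ s ∈ S, (s ∩ rdiag Ω).Nonempty → s ⊆ rdiag Ω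
  conv_mem : ∀ s ∈ S, rconv s ∈ S
  inter_const : ∀ r ∈ S, ∀ s ∈ S, ∀ t ∈ S, ∀ p ∈ t, ∀ q ∈ t,
    ({γ : Ω | (p.1, γ) ∈ r ∧ (γ, p.2) ∈ s}).ncard
      = ({γ : Ω | (q.1, γ) ∈ r ∧ (γ, q.2) ∈ s}).ncard

/-- The valency of a basis relation (the common size of the rows over the left support). -/
noncomputable def valency {Ω : Type*} (s : Set (Ω × Ω)) : ℕ :=
  sSup ((fun α => ({β | (α, β) ∈ s} : Set Ω).ncard) '' {α | ∃ β, (α, β) ∈ s})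

def IsThick {Ω : Type*} (X : CohCfg Ω) : Prop :=
  ∀ s ∈ X.S, Disjoint s (rdiag Ω) → ¬(valency s = 1 ∧ valency (rconv s) = 1)

def IsParabolic {Ω : Type*} (X : CohCfg Ω) (e : Set (Ω × Ω)) : Prop :=
  IsEquivRel e ∧ ∀ s ∈ X.S, (s ∩ e).Nonempty → s ⊆ e

def Perp {Ω : Type*} (X : CohCfg Ω) (e f : Set (Ω × Ω)) : Prop :=
  ∀ x ∈ X.S, x ⊆ e → ∀ y ∈ X.S, y ⊆ f → (rcomp x y).Nonempty → rcomp x y ∈ X.S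

def Redundant {Ω : Type*} (X : CohCfg Ω) (s : Set (Ω × Ω)) : Prop :=
  ∃ x ∈ X.S, ∃ y ∈ X.S, Disjoint x (rdiag Ω) ∧ Disjoint y (rdiag Ω) ∧
    s = rcomp x y ∧ eqvClosure x ∩ eqvClosure y = rdiag Ω

/-!
Pairwise commuting equivalence relations compose to their join, so for a finite `B ⊆ P` the
join `P_B` is the composite of its members and commutes with every relation that commutes with
each of them. The identity `P_B ∩ P_{P∖B} = 1_Ω` then follows by induction on `B`: if
`(α, β) ∈ (e ∘ P_B) ∩ P_{P∖(B∪{e})}`, choose `α e γ P_B β`; then `(α, γ) ∈ e ∩ e' = 1_Ω`, so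
`(α, β) ∈ P_B ∩ P_{P∖B}`. In the coarsened decomposition the complement of `P_B` lies in
`P_{P∖B}`, and its join with `P_B` contains the join of `P`, which is `Ω × Ω`.
-/

section Relations

variable {Ω : Type*}

lemma isEquivRel_eqvClosure (r : Set (Ω × Ω)) : IsEquivRel (eqvClosure r) where
  refl a _ he := he.1.refl a
  symm h _ he := he.1.symm (h _ he)
  trans h₁ h₂ _ he := he.1.trans (h₁ _ he) (h₂ _ he)

lemma subset_eqvClosure (r : Set (Ω × Ω)) : r ⊆ eqvClosure r := fun _ hp _ he => he.2 hp

lemma eqvClosure_subset {r e : Set (Ω × Ω)} (he : IsEquivRel e) (hr : r ⊆ e) :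
    eqvClosure r ⊆ e :=
  sInter_subset_of_mem ⟨he, hr⟩

lemma IsEquivRel.rdiag_subset {e : Set (Ω × Ω)} (he : IsEquivRel e) : rdiag Ω ⊆ e := by
  rintro ⟨a, b⟩ (h : a = b)
  subst h
  exact he.refl a

lemma isEquivRel_rdiag : IsEquivRel (rdiag Ω) where
  refl _ := rfl
  symm h := Eq.symm h
  trans h₁ h₂ := Eq.trans h₁ h₂

lemma eqvClosure_empty : eqvClosure (∅ : Set (Ω × Ω)) = rdiag Ω :=
  (eqvClosure_subset isEquivRel_rdiag (empty_subset _)).antisymm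
    (isEquivRel_eqvClosure ∅).rdiag_subset

lemma isEquivRel_joinAll (B : Set (Set (Ω × Ω))) : IsEquivRel (joinAll B) :=
  isEquivRel_eqvClosure _

lemma subset_joinAll {B : Set (Set (Ω × Ω))} {e : Set (Ω × Ω)} (he : e ∈ B) :
    e ⊆ joinAll B :=
  (subset_sUnion_of_mem he).trans (subset_eqvClosure _)

lemma joinAll_subset {B : Set (Set (Ω × Ω))} {g : Set (Ω × Ω)} (hg : IsEquivRel g)
    (h : ∀ e ∈ B, e ⊆ g) : joinAll B ⊆ g :=
  eqvClosure_subset hg (sUnion_subset h)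

lemma joinAll_mono {B B' : Set (Set (Ω × Ω))} (h : B ⊆ B') : joinAll B ⊆ joinAll B' :=
  joinAll_subset (isEquivRel_joinAll B') fun _ he => subset_joinAll (h he)

lemma joinAll_empty : joinAll (∅ : Set (Set (Ω × Ω))) = rdiag Ω := by
  rw [joinAll, sUnion_empty, eqvClosure_empty]

lemma joinAll_insert (e : Set (Ω × Ω)) (B : Set (Set (Ω × Ω))) :
    joinAll (insert e B) = rjoin e (joinAll B) := by
  refine (joinAll_subset (isEquivRel_eqvClosure _) ?_).antisymm
    (eqvClosure_subset (isEquivRel_joinAll _)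
      (union_subset (subset_joinAll (mem_insert e B)) (joinAll_mono (subset_insert e B))))
  rintro f (rfl | hf)
  · exact subset_union_left.trans (subset_eqvClosure _)
  · exact (subset_joinAll hf).trans (subset_union_right.trans (subset_eqvClosure _))

lemma rjoin_pcompl {Q : Set (Set (Ω × Ω))} {g : Set (Ω × Ω)} (hg : g ∈ Q) :
    rjoin g (pcompl Q g) = joinAll Q := by
  rw [pcompl, ← joinAll_insert, insert_sdiff_singleton, insert_eq_of_mem hg]

lemma joinAll_ne_rdiag {B : Set (Set (Ω × Ω))} {e : Set (Ω × Ω)} (he : e ∈ B)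
    (hequiv : IsEquivRel e) (hne : e ≠ rdiag Ω) : joinAll B ≠ rdiag Ω := fun h =>
  hne ((h ▸ subset_joinAll he).antisymm hequiv.rdiag_subset)

lemma rcomp_assoc (r s t : Set (Ω × Ω)) : rcomp (rcomp r s) t = rcomp r (rcomp s t) := by
  ext ⟨a, b⟩
  constructor
  · rintro ⟨γ, ⟨δ, h₁, h₂⟩, h₃⟩
    exact ⟨δ, h₁, γ, h₂, h₃⟩
  · rintro ⟨γ, h₁, δ, h₂, h₃⟩
    exact ⟨δ, ⟨γ, h₁, h₂⟩, h₃⟩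

lemma rdiag_rcomp (r : Set (Ω × Ω)) : rcomp (rdiag Ω) r = r := by
  ext ⟨a, b⟩
  constructor
  · rintro ⟨γ, (h : a = γ), hr⟩
    subst h
    exact hr
  · exact fun h => ⟨a, rfl, h⟩

lemma rcomp_rdiag (r : Set (Ω × Ω)) : rcomp r (rdiag Ω) = r := by
  ext ⟨a, b⟩
  constructor
  · rintro ⟨γ, hr, (h : γ = b)⟩
    subst h
    exact hr
  · exact fun h => ⟨b, h, rfl⟩

lemma rcomp_comm_of_comm {a b f : Set (Ω × Ω)} (ha : rcomp a f = rcomp f a)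
    (hb : rcomp b f = rcomp f b) : rcomp (rcomp a b) f = rcomp f (rcomp a b) := by
  rw [rcomp_assoc, hb, ← rcomp_assoc, ha, rcomp_assoc]

lemma IsEquivRel.rcomp_of_comm {e f : Set (Ω × Ω)} (he : IsEquivRel e) (hf : IsEquivRel f)
    (hc : rcomp e f = rcomp f e) : IsEquivRel (rcomp e f) where
  refl a := ⟨a, he.refl a, hf.refl a⟩
  symm := by
    rintro a b ⟨γ, h₁, h₂⟩
    rw [hc]
    exact ⟨γ, hf.symm h₂, he.symm h₁⟩
  trans := by
    rintro a b c ⟨γ, h₁, h₂⟩ ⟨δ, h₃, h₄⟩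
    have hγδ : (γ, δ) ∈ rcomp e f := hc ▸ ⟨b, h₂, h₃⟩
    obtain ⟨μ, h₅, h₆⟩ := hγδ
    exact ⟨μ, he.trans h₁ h₅, hf.trans h₆ h₄⟩

lemma rjoin_eq_rcomp {e f : Set (Ω × Ω)} (he : IsEquivRel e) (hf : IsEquivRel f)
    (hc : rcomp e f = rcomp f e) : rjoin e f = rcomp e f := by
  refine (eqvClosure_subset (he.rcomp_of_comm hf hc) (union_subset ?_ ?_)).antisymm ?_
  · rintro ⟨a, b⟩ h
    exact ⟨b, h, hf.refl b⟩
  · rintro ⟨a, b⟩ h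
    exact ⟨a, he.refl a, h⟩
  · rintro ⟨a, b⟩ ⟨γ, h₁, h₂⟩
    exact (isEquivRel_eqvClosure _).trans (subset_eqvClosure _ (mem_union_left _ h₁))
      (subset_eqvClosure _ (mem_union_right _ h₂))

lemma joinAll_insert_eq_rcomp {e : Set (Ω × Ω)} {B : Set (Set (Ω × Ω))} (he : IsEquivRel e)
    (hc : rcomp e (joinAll B) = rcomp (joinAll B) e) :
    joinAll (insert e B) = rcomp e (joinAll B) := by
  rw [joinAll_insert, rjoin_eq_rcomp he (isEquivRel_joinAll B) hc]

structure IsCommutingEquivFamily (P : Set (Set (Ω × Ω))) : Prop where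
  isEquivRel : ∀ e ∈ P, IsEquivRel e
  comm : ∀ e ∈ P, ∀ f ∈ P, rcomp e f = rcomp f e

lemma IsCommutingEquivFamily.mono {P B : Set (Set (Ω × Ω))} (hP : IsCommutingEquivFamily P)
    (hB : B ⊆ P) : IsCommutingEquivFamily B :=
  ⟨fun e he => hP.isEquivRel e (hB he), fun e he f hf => hP.comm e (hB he) f (hB hf)⟩

lemma IsCommutingEquivFamily.joinAll_rcomp_comm {B : Set (Set (Ω × Ω))}
    (hB : IsCommutingEquivFamily B) (hfin : B.Finite) {f : Set (Ω × Ω)}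
    (hf : ∀ e ∈ B, rcomp e f = rcomp f e) : rcomp (joinAll B) f = rcomp f (joinAll B) := by
  induction B, hfin using Set.Finite.induction_on generalizing f with
  | empty => rw [joinAll_empty, rdiag_rcomp, rcomp_rdiag]
  | @insert a s _ _ ih =>
    have hs := hB.mono (subset_insert a s)
    have has : rcomp a (joinAll s) = rcomp (joinAll s) a :=
      (ih hs fun e he => hB.comm e (mem_insert_of_mem a he) a (mem_insert a s)).symm
    rw [joinAll_insert_eq_rcomp (hB.isEquivRel a (mem_insert a s)) has]
    exact rcomp_comm_of_comm (hf a (mem_insert a s))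
      (ih hs fun e he => hf e (mem_insert_of_mem a he))

lemma IsCommutingEquivFamily.joinAll_comm_joinAll {P B B' : Set (Set (Ω × Ω))}
    (hP : IsCommutingEquivFamily P) (hB : B ⊆ P) (hB' : B' ⊆ P) (hBfin : B.Finite)
    (hB'fin : B'.Finite) : rcomp (joinAll B) (joinAll B') = rcomp (joinAll B') (joinAll B) :=
  (hP.mono hB).joinAll_rcomp_comm hBfin fun e he =>
    ((hP.mono hB').joinAll_rcomp_comm hB'fin fun e' he' =>
      hP.comm e' (hB' he') e (hB he)).symm

end Relations

section CartesianDecomposition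

variable {Ω : Type*}

lemma IsACD.isCommutingEquivFamily {P : Set (Set (Ω × Ω))} (hP : IsACD P) :
    IsCommutingEquivFamily P :=
  ⟨fun e he => (hP.2.1 e he).1, hP.2.2.1⟩

lemma IsACD.joinAll_eq_univ {P : Set (Set (Ω × Ω))} (hP : IsACD P) : joinAll P = univ := by
  obtain ⟨⟨e, he⟩, -, -, hcompl⟩ := hP
  rw [← rjoin_pcompl he, (hcompl e he).2]

lemma IsACD.joinAll_inter_joinAll_sdiff {P B : Set (Set (Ω × Ω))} (hP : IsACD P)
    (hB : B ⊆ P) (hBfin : B.Finite) : joinAll B ∩ joinAll (P \ B) = rdiag Ω := by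
  have hcf := hP.isCommutingEquivFamily
  refine subset_antisymm ?_
    (subset_inter (isEquivRel_joinAll _).rdiag_subset (isEquivRel_joinAll _).rdiag_subset)
  induction B, hBfin using Set.Finite.induction_on with
  | empty => exact inter_subset_left.trans joinAll_empty.subset
  | @insert a s ha hsfin ih =>
    have haP := hB (mem_insert a s)
    have hsP := (subset_insert a s).trans hB
    rintro ⟨α, β⟩ ⟨hαβ, hαβ'⟩
    rw [joinAll_insert_eq_rcomp (hcf.isEquivRel a haP) ((hcf.mono hsP).joinAll_rcomp_comm
      hsfin fun e he => hcf.comm e (hsP he) a haP).symm] at hαβ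
    obtain ⟨γ, hαγ, hγβ⟩ := hαβ
    have hs_le : joinAll s ⊆ pcompl P a :=
      joinAll_mono fun e he => ⟨hsP he, ne_of_mem_of_not_mem he ha⟩
    have hrest_le : joinAll (P \ insert a s) ⊆ pcompl P a :=
      joinAll_mono (sdiff_subset_sdiff_right (singleton_subset_iff.2 (mem_insert a s)))
    have hαγ' : (α, γ) ∈ pcompl P a :=
      (isEquivRel_joinAll _).trans (hrest_le hαβ') ((isEquivRel_joinAll _).symm (hs_le hγβ))
    have hdiag : (α, γ) ∈ rdiag Ω := (hP.2.2.2 a haP).1 ▸ ⟨hαγ, hαγ'⟩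
    obtain rfl : α = γ := hdiag
    exact ih hsP ⟨hγβ, joinAll_mono (sdiff_subset_sdiff_right (subset_insert a s)) hαβ'⟩

lemma joinAll_sUnion_subset (C : Set (Set (Set (Ω × Ω)))) :
    joinAll (⋃₀ C) ⊆ joinAll {g | ∃ B ∈ C, g = joinAll B} :=
  joinAll_subset (isEquivRel_joinAll _) fun _ ⟨B, hB, he⟩ =>
    (subset_joinAll he).trans (subset_joinAll ⟨B, hB, rfl⟩)

lemma IsPartitionOf.pcompl_joinAll_subset {P : Set (Set (Ω × Ω))} {C : Set (Set (Set (Ω × Ω)))}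
    (hC : IsPartitionOf P C) {B : Set (Set (Ω × Ω))} (hB : B ∈ C) :
    pcompl {g | ∃ B ∈ C, g = joinAll B} (joinAll B) ⊆ joinAll (P \ B) := by
  obtain ⟨-, hdisj, hCP⟩ := hC
  refine joinAll_subset (isEquivRel_joinAll _) ?_
  rintro _ ⟨⟨B', hB', rfl⟩, hne⟩
  exact joinAll_mono fun e he => ⟨hCP ▸ ⟨B', hB', he⟩,
    disjoint_left.1 (hdisj B' hB' B hB fun h => hne (congrArg joinAll h)) he⟩

end CartesianDecomposition

/-- for every partition `C` of an atomic Cartesian decomposition `P`,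
the set of joins of the blocks is again an atomic Cartesian decomposition. -/
theorem stmt9 {Ω : Type*} [Fintype Ω] (P : Set (Set (Ω × Ω)))
    (C : Set (Set (Set (Ω × Ω))))
    (hP : IsACD P) (hC : IsPartitionOf P C) :
    IsACD {g | ∃ B ∈ C, g = joinAll B} := by
  have hBP : ∀ B ∈ C, B ⊆ P := fun B hB => hC.2.2 ▸ subset_sUnion_of_mem hB
  have hBfin : ∀ B ∈ C, B.Finite := fun B hB => (toFinite P).subset (hBP B hB)
  refine ⟨?_, ?_, ?_, ?_⟩
  · obtain ⟨e, he⟩ := hP.1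
    rw [← hC.2.2] at he
    obtain ⟨B, hB, -⟩ := he
    exact ⟨_, B, hB, rfl⟩
  · rintro _ ⟨B, hB, rfl⟩
    obtain ⟨e, he⟩ := hC.1 B hB
    obtain ⟨hequiv, hne⟩ := hP.2.1 e (hBP B hB he)
    exact ⟨isEquivRel_joinAll B, joinAll_ne_rdiag he hequiv hne⟩
  · rintro _ ⟨B, hB, rfl⟩ _ ⟨B', hB', rfl⟩
    exact hP.isCommutingEquivFamily.joinAll_comm_joinAll (hBP B hB) (hBP B' hB')
      (hBfin B hB) (hBfin B' hB')
  · intro g hg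
    obtain ⟨B, hB, rfl⟩ := id hg
    refine ⟨subset_antisymm ?_ (subset_inter (isEquivRel_joinAll _).rdiag_subset
      (isEquivRel_joinAll _).rdiag_subset), ?_⟩
    · exact (inter_subset_inter_right _ (hC.pcompl_joinAll_subset hB)).trans
        (hP.joinAll_inter_joinAll_sdiff (hBP B hB) (hBfin B hB)).subset
    · rw [rjoin_pcompl hg]
      refine eq_univ_of_univ_subset ?_
      calc univ = joinAll (⋃₀ C) := by rw [hC.2.2, hP.joinAll_eq_univ]
        _ ⊆ _ := joinAll_sUnion_subset C
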